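/- Let N be a 3-prime zero-symmetric left near-ring and d a nonzero multiplicative derivation of N such that [d(x), y] ∈ Z for all x, y ∈ N, where Z is the multiplicative center. Then N is a commutative ring. -/

import Mathlib

/-!
Every value of `d` commutes with everything: if all commutators `[a, y]` are central, then
`f = [a, y]` satisfies `f * f = 0` (because `[a, a * y] = a * f` is central as well), and a
central element squaring to zero vanishes in a 3-prime near-ring. Since `d (a * b)` commutes
with `n`, expanding it by the derivation rule gives `(a * n - n * a) * d n = 0`, and, when
`d n = 0`, `(n * m - m * n) * d c = 0` for any `c` with `d c ≠ 0`; 3-primeness turns both into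
commutation. Once multiplication is commutative, `N` is also right distributive, so products
commute additively, which gives `w * w = 0` for `w = x + y - (y + x)`, hence `x + y = y + x`.
-/

class LeftNearRing (N : Type*) extends AddGroup N, Mul N where
  mul_assoc : ∀ a b c : N, a * b * c = a * (b * c)
  left_distrib : ∀ a b c : N, a * (b + c) = a * b + a * c

namespace LeftNearRing

variable {N : Type*} [LeftNearRing N]

instance toSemigroup : Semigroup N where
  mul_assoc := LeftNearRing.mul_assoc

protected theorem mul_zero (a : N) : a * 0 = 0 := by
  have h := LeftNearRing.left_distrib a 0 0
  rw [add_zero] at h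
  exact add_eq_left.mp h.symm

protected theorem mul_neg (a b : N) : a * -b = -(a * b) := by
  refine (neg_eq_of_add_eq_zero_right ?_).symm
  rw [← LeftNearRing.left_distrib, add_neg_cancel, LeftNearRing.mul_zero]

protected theorem mul_sub (a b c : N) : a * (b - c) = a * b - a * c := by
  rw [sub_eq_add_neg, LeftNearRing.left_distrib, LeftNearRing.mul_neg, ← sub_eq_add_neg]

theorem sub_mul_of_central {z : N} (hz : ∀ n, z * n = n * z) (a b : N) :
    (a - b) * z = a * z - b * z := by
  rw [← hz, LeftNearRing.mul_sub, hz, hz]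

theorem add_comm_mul_of_right_distrib (hr : ∀ a b c : N, (a + b) * c = a * c + b * c)
    (a b u v : N) : a * v + b * u = b * u + a * v := by
  have h : a * u + a * v + (b * u + b * v) = a * u + b * u + (a * v + b * v) := by
    rw [← LeftNearRing.left_distrib, ← LeftNearRing.left_distrib, ← hr, ← hr, ← hr,
      LeftNearRing.left_distrib]
  rw [add_assoc, add_assoc] at h
  have h' := add_left_cancel h
  rw [← add_assoc, ← add_assoc] at h'
  exact add_right_cancel h'

section Prime

variable (hp : ∀ a b : N, (∀ n : N, a * n * b = 0) → a = 0 ∨ b = 0)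
include hp

theorem eq_zero_or_eq_zero_of_central_mul {z : N} (hz : ∀ n, z * n = n * z) {w : N}
    (h : z * w = 0) : z = 0 ∨ w = 0 :=
  hp z w fun n => by rw [hz n, mul_assoc, h, LeftNearRing.mul_zero]

theorem eq_zero_or_eq_zero_of_mul_central {z : N} (hz : ∀ n, z * n = n * z) {w : N}
    (h : w * z = 0) : w = 0 ∨ z = 0 :=
  (eq_zero_or_eq_zero_of_central_mul hp hz (hz w ▸ h)).symm

theorem eq_zero_of_central_of_mul_self {f : N} (hf : ∀ n, f * n = n * f) (h : f * f = 0) :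
    f = 0 :=
  (eq_zero_or_eq_zero_of_central_mul hp hf h).elim id id

theorem central_of_forall_commutator_central {a : N}
    (ha : ∀ y u : N, (a * y - y * a) * u = u * (a * y - y * a)) (y : N) : a * y = y * a := by
  set f := a * y - y * a with hf_def
  have hf : ∀ u, f * u = u * f := ha y
  have haf : ∀ u, a * f * u = u * (a * f) := by
    have : a * (a * y) - a * y * a = a * f := by rw [hf_def, LeftNearRing.mul_sub, mul_assoc]
    simpa only [this] using ha (a * y)
  have hsq : f * f = 0 := by
    have : a * y * f = y * a * f := by
      rw [mul_assoc, ← hf, ← mul_assoc, haf, ← mul_assoc]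
    rw [sub_mul_of_central hf, this, sub_self]
  exact sub_eq_zero.mp (eq_zero_of_central_of_mul_self hp hf hsq)

theorem add_comm_of_mul_comm (hcomm : ∀ x y : N, x * y = y * x) (x y : N) :
    x + y = y + x := by
  have hr (a b c : N) : (a + b) * c = a * c + b * c := by
    rw [hcomm _ c, LeftNearRing.left_distrib, hcomm c, hcomm c]
  set w := x + y - (y + x)
  have hw : w * w = 0 := by
    rw [LeftNearRing.mul_sub, LeftNearRing.left_distrib, LeftNearRing.left_distrib,
      add_comm_mul_of_right_distrib hr w w y x, sub_self]
  exact sub_eq_zero.mp (eq_zero_of_central_of_mul_self hp (hcomm w) hw)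

end Prime

def IsMultiplicativeDerivation (d : N → N) : Prop :=
  ∀ x y : N, d (x * y) = x * d y + d x * y

section Derivation

variable {d : N → N} (hd : IsMultiplicativeDerivation d)
include hd

theorem IsMultiplicativeDerivation.add_mul (x y w : N) :
    (x * d y + d x * y) * w = x * (d y * w) + d x * (y * w) := by
  have h := hd (x * y) w
  rw [mul_assoc, hd x (y * w), hd x y, hd y w, LeftNearRing.left_distrib, ← mul_assoc x y,
    add_assoc] at h
  exact (add_left_cancel h).symm

theorem IsMultiplicativeDerivation.mul_mul_add_of_central (hdc : ∀ x n : N, d x * n = n * d x)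
    (a b n : N) : a * n * d b + b * n * d a = n * a * d b + n * b * d a := by
  have h := hdc (a * b) n
  rw [hd a b, hd.add_mul, LeftNearRing.left_distrib, hdc b n, ← mul_assoc a n, hdc a (b * n),
    ← mul_assoc n a, hdc a b, ← mul_assoc n b] at h
  exact h

theorem IsMultiplicativeDerivation.mul_comm_of_central
    (hp : ∀ a b : N, (∀ n : N, a * n * b = 0) → a = 0 ∨ b = 0)
    (hdc : ∀ x n : N, d x * n = n * d x) {c : N} (hc : d c ≠ 0) (x y : N) : x * y = y * x := by
  by_cases hy : d y = 0
  · have h := hd.mul_mul_add_of_central hdc c y x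
    rw [hy, LeftNearRing.mul_zero, LeftNearRing.mul_zero, zero_add, zero_add] at h
    have h' : (y * x - x * y) * d c = 0 := by rw [sub_mul_of_central (hdc c), h, sub_self]
    exact (sub_eq_zero.mp ((eq_zero_or_eq_zero_of_mul_central hp (hdc c) h').resolve_right hc)).symm
  · have h := add_right_cancel (hd.mul_mul_add_of_central hdc x y y)
    have h' : (x * y - y * x) * d y = 0 := by rw [sub_mul_of_central (hdc y), h, sub_self]
    exact sub_eq_zero.mp ((eq_zero_or_eq_zero_of_mul_central hp (hdc y) h').resolve_right hy)

end Derivation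

end LeftNearRing

theorem stmt10_general {N : Type*} [LeftNearRing N]
    (hp : ∀ a b : N, (∀ n : N, a * n * b = 0) → a = 0 ∨ b = 0)
    (d : N → N) (hd : ∀ x y : N, d (x * y) = x * d y + d x * y)
    (hd0 : ∃ x : N, d x ≠ 0)
    (hc : ∀ x y u : N, (d x * y - y * d x) * u = u * (d x * y - y * d x)) :
    (∀ x y : N, x * y = y * x) ∧ (∀ x y : N, x + y = y + x) := by
  obtain ⟨c, hdc⟩ := hd0
  have hcentral (x : N) : ∀ n, d x * n = n * d x :=
    LeftNearRing.central_of_forall_commutator_central hp (hc x)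
  have hcomm : ∀ x y : N, x * y = y * x :=
    LeftNearRing.IsMultiplicativeDerivation.mul_comm_of_central hd hp hcentral hdc
  exact ⟨hcomm, LeftNearRing.add_comm_of_mul_comm hp hcomm⟩

theorem stmt10 {N : Type*} [LeftNearRing N]
    (hzs : ∀ x : N, 0 * x = 0)
    (hp : ∀ a b : N, (∀ n : N, a * n * b = 0) → a = 0 ∨ b = 0)
    (d : N → N) (hd : ∀ x y : N, d (x * y) = x * d y + d x * y)
    (hd0 : ∃ x : N, d x ≠ 0)
    (hc : ∀ x y u : N, (d x * y - y * d x) * u = u * (d x * y - y * d x)) :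
    (∀ x y : N, x * y = y * x) ∧ (∀ x y : N, x + y = y + x) :=
  stmt10_general hp d hd hd0 hc
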